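/- arXiv:2509.09243 — 7 statements merged into one kernel-verified Lean document; each statement's English description precedes it below -/
import Mathlib

section
/- Let D be an integral domain that is not a field, and let A be a torsion-free D-module that is finitely generated. Then the intersection of the submodules dA over all nonzero d in D is the zero submodule (i.e., the D-adic topology on A is Hausdorff). -/
/-!
A finitely generated torsion-free module `A` over a domain `D` is separated by `D`-valued linear
functionals: a nonzero `x` stays nonzero in the localization of `A` at the fraction field `K`, a
`K`-linear functional detects it there, and since `A` is finitely generated its image lies in
`b⁻¹ D` for some `b ≠ 0`. A functional `h` maps `⋂ d A` into `⋂ d D`, and this intersection is zero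
when `D` is not a field: a nonzero `u` is not divisible by `u p` for a nonzero nonunit `p`.
-/

theorem eq_zero_of_forall_dvd_of_not_isField {R : Type*} [CommRing R] [IsDomain R]
    (hR : ¬IsField R) {u : R} (hu : ∀ d : R, d ≠ 0 → d ∣ u) : u = 0 := by
  by_contra hu0
  obtain ⟨p, hp0, hp⟩ := Ring.exists_not_isUnit_of_not_isField hR
  have hup : u * p ∣ u * 1 := by simpa using hu (u * p) (mul_ne_zero hu0 hp0)
  exact hp (isUnit_iff_dvd_one.mpr ((mul_dvd_mul_iff_left hu0).mp hup))

theorem dvd_apply_of_mem_span_singleton_smul_top {R M : Type*} [CommSemiring R]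
    [AddCommMonoid M] [Module R M] (f : Module.Dual R M) {d : R} {x : M}
    (hx : x ∈ Ideal.span {d} • (⊤ : Submodule R M)) : d ∣ f x := by
  have := Submodule.smul_comap_le_comap_smul f ⊤ (Ideal.span {d}) (by simpa using hx)
  simpa [Ideal.mem_span_singleton] using this

theorem exists_fractionRing_linearMap_apply_ne_zero (R : Type*) {M : Type*} [CommRing R]
    [IsDomain R] [AddCommGroup M] [Module R M] [NoZeroSMulDivisors R M] {x : M} (hx : x ≠ 0) :
    ∃ f : M →ₗ[R] FractionRing R, f x ≠ 0 := by
  let ι := LocalizedModule.mkLinearMap (nonZeroDivisors R) M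
  have hιx : ι x ≠ 0 := fun h => by
    obtain ⟨r, hr, hrx⟩ := LocalizedModule.mem_ker_mkLinearMap_iff.mp (LinearMap.mem_ker.mpr h)
    exact hx ((smul_eq_zero.mp hrx).resolve_left (nonZeroDivisors.ne_zero hr))
  obtain ⟨g, hg⟩ := not_forall.mp <|
    mt (Module.forall_dual_apply_eq_zero_iff (FractionRing R) (ι x)).mp hιx
  exact ⟨(g.restrictScalars R).comp ι, hg⟩

theorem exists_dual_algebraMap_eq_smul {R M K : Type*} [CommRing R] [AddCommGroup M]
    [Module R M] [Module.Finite R M] [CommRing K] [Algebra R K] [IsFractionRing R K]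
    (f : M →ₗ[R] K) :
    ∃ b ∈ nonZeroDivisors R, ∃ h : Module.Dual R M, ∀ a, algebraMap R K (h a) = b • f a := by
  obtain ⟨b, hb, hint⟩ := FractionalIdeal.isFractional_of_fg (S := nonZeroDivisors R)
    (Module.Finite.fg_top.map f)
  let ι := Algebra.linearMap R K
  have hι : Function.Injective ι := IsFractionRing.injective R K
  let g : M →ₗ[R] LinearMap.range ι :=
    (b • f).codRestrict _ fun a => hint _ (Submodule.mem_map_of_mem trivial)
  exact ⟨b, hb, (LinearEquiv.ofInjective ι hι).symm.toLinearMap ∘ₗ g, fun a =>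
    congrArg Subtype.val ((LinearEquiv.ofInjective ι hι).apply_symm_apply (g a))⟩

theorem Module.exists_dual_apply_ne_zero_of_finite (R : Type*) {M : Type*} [CommRing R]
    [IsDomain R] [AddCommGroup M] [Module R M] [Module.Finite R M] [NoZeroSMulDivisors R M]
    {x : M} (hx : x ≠ 0) : ∃ h : Module.Dual R M, h x ≠ 0 := by
  obtain ⟨f, hfx⟩ := exists_fractionRing_linearMap_apply_ne_zero R hx
  obtain ⟨b, hb, h, hh⟩ := exists_dual_algebraMap_eq_smul f
  refine ⟨h, fun hx0 => hfx ?_⟩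
  have hbfx := hh x
  rw [hx0, map_zero, eq_comm, smul_eq_zero] at hbfx
  exact hbfx.resolve_left (nonZeroDivisors.ne_zero hb)

/-- Let `D` be an integral domain that is not a field, and `A` a torsion-free finitely
generated `D`-module.  Then the intersection of the submodules `d • A` over all nonzero
`d ∈ D` is the zero submodule. -/
theorem stmt_0 {D A : Type*} [CommRing D] [IsDomain D] (hD : ¬ IsField D)
    [AddCommGroup A] [Module D A] [Module.Finite D A] [NoZeroSMulDivisors D A] :
    (⨅ d ∈ {d : D | d ≠ 0}, (Ideal.span {d} • (⊤ : Submodule D A))) = ⊥ := by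
  refine eq_bot_iff.mpr fun x hx => (Submodule.mem_bot D).mpr ?_
  simp only [Submodule.mem_iInf] at hx
  by_contra hx0
  obtain ⟨h, hhx⟩ := Module.exists_dual_apply_ne_zero_of_finite D hx0
  exact hhx (eq_zero_of_forall_dvd_of_not_isField hD fun d hd =>
    dvd_apply_of_mem_span_singleton_smul_top h (hx d hd))
end

section
/- Let D be an integrally closed domain with fraction field K, B a finite-dimensional K-algebra, and A a D-subalgebra of B with B = (D∖{0})⁻¹A and every element of A integral over D. Then A contains every element of B that is integral over D if and only if for every a ∈ A, the ring A ∩ K[a] is integrally closed in K[a]. -/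
open Polynomial
set_option synthInstance.maxHeartbeats 400000
set_option maxHeartbeats 1000000

theorem aux_int {D C : Type*} [CommRing D] [CommRing C] [Algebra D C]
    {n : ℕ} (c : Fin n → C) (hci : ∀ i, IsIntegral D (c i)) (x : C)
    (hx : x ^ n + ∑ i : Fin n, c i * x ^ (i : ℕ) = 0) : IsIntegral D x := by
  set S : Subalgebra D C := Algebra.adjoin D (Set.range c) with hS
  haveI : Module.Finite D S := ⟨(Subalgebra.toSubmodule S).fg_top.mpr <|
    fg_adjoin_of_finite (Set.finite_range c) (by rintro _ ⟨i, rfl⟩; exact hci i)⟩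
  haveI : Algebra.IsIntegral D S := Algebra.IsIntegral.of_finite D S
  set cS : Fin n → S := fun i => ⟨c i, Algebra.subset_adjoin ⟨i, rfl⟩⟩ with hcS
  set p : S[X] := X ^ n + ∑ i : Fin n, Polynomial.C (cS i) * X ^ (i : ℕ) with hp
  by_cases hn : n = 0
  · subst hn
    simp only [pow_zero, Finset.univ_eq_empty, Finset.sum_empty, add_zero] at hx
    have : Subsingleton C := subsingleton_of_zero_eq_one hx.symm
    have : x = 0 := Subsingleton.elim _ _
    rw [this]; exact isIntegral_zero
  have pmon : p.Monic := by
    apply Polynomial.monic_X_pow_add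
    refine lt_of_le_of_lt (Polynomial.degree_sum_le _ _) ?_
    rw [Finset.sup_lt_iff (by exact_mod_cast WithBot.bot_lt_coe n)]
    intro i _
    exact lt_of_le_of_lt (Polynomial.degree_C_mul_X_pow_le _ _)
      (by exact_mod_cast i.2)
  have peval : Polynomial.aeval x p = 0 := by
    rw [hp, map_add, map_pow, Polynomial.aeval_X, map_sum]
    have h1 : ∀ i : Fin n, (Polynomial.aeval x) (Polynomial.C (cS i) * X ^ (i : ℕ))
        = c i * x ^ (i : ℕ) := by
      intro i
      rw [map_mul, map_pow, Polynomial.aeval_X, Polynomial.aeval_C]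
      congr 1
    simp only [h1]
    exact hx
  have hxint : IsIntegral S x := ⟨p, pmon, by rw [← Polynomial.aeval_def]; exact peval⟩
  exact isIntegral_trans (A := S) x hxint


/-- Let `D` be an integrally closed domain with fraction field `K`, `B` a finite-dimensional
`K`-algebra, and `A` a `D`-subalgebra of `B` with `B = (D∖{0})⁻¹ A` whose elements are all
integral over `D`.  Then `A` contains every element of `B` integral over `D` if and only if,
for every `a ∈ A`, the ring `A ∩ K[a]` is integrally closed in `K[a]`. -/
theorem stmt_3 {D K B : Type*} [CommRing D] [IsDomain D] [IsIntegrallyClosed D]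
    [Field K] [Algebra D K] [IsFractionRing D K]
    [Ring B] [Algebra K B] [Algebra D B] [IsScalarTower D K B] [FiniteDimensional K B]
    (A : Subalgebra D B) (hAint : ∀ x ∈ A, IsIntegral D x)
    (hloc : ∀ b : B, ∃ a ∈ A, ∃ d : D, d ≠ 0 ∧ algebraMap D B d * b = a) :
    (∀ b : B, IsIntegral D b → b ∈ A)
      ↔ (∀ a ∈ A, ∀ x ∈ Algebra.adjoin K ({a} : Set B),
          (∃ n : ℕ, 0 < n ∧ ∃ c : Fin n → B,
            (∀ i, c i ∈ A ∧ c i ∈ Algebra.adjoin K ({a} : Set B)) ∧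
            x ^ n + ∑ i : Fin n, c i * x ^ (i : ℕ) = 0) →
          x ∈ A) := by
  constructor
  · intro hb a ha x hx ⟨n, hn, c, hc, heq⟩
    have hval : Function.Injective ((Algebra.adjoin K ({a} : Set B)).val.restrictScalars D) :=
      Subtype.val_injective
    have hccint : ∀ i : Fin n,
        IsIntegral D (⟨c i, (hc i).2⟩ : Algebra.adjoin K ({a} : Set B)) := fun i =>
      (isIntegral_algHom_iff ((Algebra.adjoin K ({a} : Set B)).val.restrictScalars D) hval).mp
        (hAint _ (hc i).1)
    have key : (⟨x, hx⟩ : Algebra.adjoin K ({a} : Set B)) ^ n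
        + ∑ i : Fin n, (⟨c i, (hc i).2⟩ : Algebra.adjoin K ({a} : Set B)) * ⟨x, hx⟩ ^ (i : ℕ)
        = 0 := by
      apply Subtype.ext
      push_cast
      exact heq
    have h2 := aux_int _ hccint _ key
    exact hb x (h2.map ((Algebra.adjoin K ({a} : Set B)).val.restrictScalars D))
  · intro h b hbint
    obtain ⟨p, pm, pe⟩ := hbint
    by_cases hn : p.natDegree = 0
    · have h1 : p = 1 := pm.natDegree_eq_zero.mp hn
      rw [h1, eval₂_one] at pe
      have : b = 0 := by
        calc b = b * 1 := (mul_one b).symm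
        _ = 0 := by rw [pe, mul_zero]
      rw [this]; exact A.zero_mem
    · obtain ⟨a, ha, d, hd, hda⟩ := hloc b
      have hk : (algebraMap D K d) ≠ 0 := by
        simpa using (IsFractionRing.to_map_eq_zero_iff (K := K)).not.mpr hd
      have hab : algebraMap K B (algebraMap D K d) * b = a := by
        rw [← IsScalarTower.algebraMap_apply]; exact hda
      have hbmem : b ∈ Algebra.adjoin K ({a} : Set B) := by
        have : b = (algebraMap D K d)⁻¹ • a := by
          rw [← hab, Algebra.smul_def, ← mul_assoc, ← map_mul, inv_mul_cancel₀ hk,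
            map_one, one_mul]
        rw [this]
        exact SMulMemClass.smul_mem _ (Algebra.subset_adjoin rfl)
      have key : b ^ p.natDegree + ∑ i : Fin p.natDegree,
          algebraMap D B (p.coeff (i : ℕ)) * b ^ (i : ℕ) = 0 := by
        have h2 := Polynomial.eval₂_eq_sum_range (algebraMap D B) b (p := p)
        rw [h2, Finset.sum_range_succ, pm.coeff_natDegree, map_one, one_mul] at pe
        rw [Fin.sum_univ_eq_sum_range (fun i => algebraMap D B (p.coeff i) * b ^ i), add_comm]
        exact pe
      exact h a ha b hbmem ⟨p.natDegree, Nat.pos_of_ne_zero hn,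
        fun i => algebraMap D B (p.coeff (i : ℕ)),
        fun i => ⟨A.algebraMap_mem _, by
          show algebraMap D B (p.coeff (i : ℕ)) ∈ _
          rw [IsScalarTower.algebraMap_apply D K B]
          exact Subalgebra.algebraMap_mem _ _⟩, key⟩
end

section
/- Let D = ℤ_(2) and let A be the ring of Hurwitz quaternions over D inside the rational quaternion division algebra B. Then every element of B that is integral over D belongs to A; that is, A equals the set of all elements of B integral over D. -/
/-- Membership in `ℤ_(2)`, the localization of `ℤ` at the prime `2`: a rational number with
odd denominator. -/
def memZ2 (x : ℚ) : Prop := ∃ m n : ℤ, Odd n ∧ x = (m : ℚ) / (n : ℚ)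

/-!
`ℤ_(2)` is the valuation subring of the `2`-adic valuation on `ℚ`, hence integrally closed, so by
Gauss's lemma the minimal polynomial over `ℚ` of a quaternion `α` integral over `ℤ_(2)` has
coefficients in `ℤ_(2)`. For non-scalar `α` that polynomial is `X² - 2 re(α) X + N(α)`, so in all
cases `N(α) = a₀² + a₁² + a₂² + a₃² ∈ ℤ_(2)`.

Conversely, write `2aᵢ = kᵢ / (2^e u)` with `u` odd; then `4^(e+1) ∣ Σ kᵢ²`. A sum of four squares
divisible by `8` has all terms even, so descent gives `kᵢ = 2^e kᵢ'` with `4 ∣ Σ kᵢ'²`, and a sum of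
four squares divisible by `4` has terms of a common parity: either every `aᵢ = kᵢ' / 2u` lies in
`ℤ_(2)`, or every one lies in `1/2 + ℤ_(2)`.
-/

open Polynomial Quaternion

theorem Int.sq_emod_cases (x : ℤ) :
    (x % 2 = 0 ∧ x ^ 2 % 4 = 0) ∨ (x % 2 = 1 ∧ x ^ 2 % 8 = 1) := by
  obtain ⟨m, rfl | rfl⟩ := Int.even_or_odd' x
  · have : (2 * m) ^ 2 = 4 * m ^ 2 := by ring
    omega
  · obtain ⟨j, hj⟩ := Int.even_mul_succ_self m
    have : (2 * m + 1) ^ 2 = 4 * (m * (m + 1)) + 1 := by ring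
    omega

theorem Int.even_of_eight_dvd_sum_sq {k : Fin 4 → ℤ} (h : 8 ∣ ∑ i, k i ^ 2) (i : Fin 4) :
    Even (k i) := by
  rw [Fin.sum_univ_four] at h
  have := Int.sq_emod_cases (k 0)
  have := Int.sq_emod_cases (k 1)
  have := Int.sq_emod_cases (k 2)
  have := Int.sq_emod_cases (k 3)
  rw [Int.even_iff]
  fin_cases i <;> simp <;> omega

theorem Int.even_or_odd_of_four_dvd_sum_sq {k : Fin 4 → ℤ} (h : 4 ∣ ∑ i, k i ^ 2) :
    (∀ i, Even (k i)) ∨ (∀ i, Odd (k i)) := by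
  rw [Fin.sum_univ_four] at h
  have := Int.sq_emod_cases (k 0)
  have := Int.sq_emod_cases (k 1)
  have := Int.sq_emod_cases (k 2)
  have := Int.sq_emod_cases (k 3)
  rcases Int.emod_two_eq_zero_or_one (k 0) with h0 | h0
  · refine Or.inl fun i => ?_
    rw [Int.even_iff]
    fin_cases i <;> simp <;> omega
  · refine Or.inr fun i => ?_
    rw [Int.odd_iff]
    fin_cases i <;> simp <;> omega

theorem Int.exists_two_pow_mul_of_four_pow_dvd_sum_sq (e : ℕ) {k : Fin 4 → ℤ}
    (h : 4 ^ (e + 1) ∣ ∑ i, k i ^ 2) :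
    ∃ k' : Fin 4 → ℤ, (∀ i, k i = 2 ^ e * k' i) ∧ 4 ∣ ∑ i, k' i ^ 2 := by
  induction e generalizing k with
  | zero => exact ⟨k, by simp, by simpa using h⟩
  | succ e ih =>
    have h8 : 8 ∣ ∑ i, k i ^ 2 := Dvd.dvd.trans ⟨2 * 4 ^ e, by ring⟩ h
    choose l hl using fun i => (Int.even_of_eight_dvd_sum_sq h8 i).two_dvd
    have hsum : ∑ i, k i ^ 2 = 4 * ∑ i, l i ^ 2 := by
      simp only [hl, mul_pow, Finset.mul_sum]
      norm_num
    rw [hsum, pow_succ', mul_dvd_mul_iff_left (by norm_num)] at h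
    obtain ⟨k', hk', h4⟩ := ih h
    exact ⟨k', fun i => by rw [hl, hk', pow_succ']; ring, h4⟩

theorem Rat.exists_eq_div_two_pow_mul_odd {ι : Type*} [Fintype ι] (q : ι → ℚ) :
    ∃ (e : ℕ) (u : ℤ) (k : ι → ℤ), Odd u ∧ ∀ i, q i = k i / (2 ^ e * u) := by
  set d := ∏ i, (q i).den
  obtain ⟨e, u, hu, hd⟩ := Nat.exists_eq_two_pow_mul_odd (n := d) (by positivity)
  choose c hc using fun i => Finset.dvd_prod_of_mem (fun i => (q i).den) (Finset.mem_univ i)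
  refine ⟨e, u, fun i => (q i).num * c i, by exact_mod_cast hu, fun i => ?_⟩
  have hc0 : (c i : ℚ) ≠ 0 := by
    have : (q i).den * c i ≠ 0 := hc i ▸ (by positivity)
    exact_mod_cast right_ne_zero_of_mul this
  have hden : (2 ^ e * ((u : ℤ) : ℚ)) = (q i).den * c i := by
    exact_mod_cast hd.symm.trans (hc i)
  rw [hden]
  push_cast
  rw [mul_div_mul_right _ _ hc0, Rat.num_div_den]

theorem memZ2_or_memZ2_sub_half_of_four_dvd_sum_sq {u : ℤ} (hu : Odd u) {k : Fin 4 → ℤ}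
    (h : 4 ∣ ∑ i, k i ^ 2) :
    (∀ i, memZ2 (k i / (2 * u))) ∨ (∀ i, memZ2 (k i / (2 * u) - 1 / 2)) := by
  have hu0 : (u : ℚ) ≠ 0 := Int.cast_ne_zero.mpr (by rintro rfl; simp at hu)
  rcases Int.even_or_odd_of_four_dvd_sum_sq h with heven | hodd
  · refine Or.inl fun i => ?_
    obtain ⟨l, hl⟩ := heven i
    refine ⟨l, u, hu, ?_⟩
    rw [hl]
    push_cast
    field_simp
    ring
  · refine Or.inr fun i => ?_
    obtain ⟨l, hl⟩ := (hodd i).sub_odd hu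
    refine ⟨l, u, hu, ?_⟩
    have hk : (k i : ℚ) = l + l + u := by exact_mod_cast (by omega : k i = l + l + u)
    rw [hk]
    field_simp
    ring

theorem memZ2_or_memZ2_sub_half_of_memZ2_sum_sq {q : Fin 4 → ℚ} (h : memZ2 (∑ i, q i ^ 2)) :
    (∀ i, memZ2 (q i)) ∨ (∀ i, memZ2 (q i - 1 / 2)) := by
  obtain ⟨e, u, k, hu, hq⟩ := Rat.exists_eq_div_two_pow_mul_odd q
  obtain ⟨m, w, hw, hmw⟩ := h
  have hu0 : (u : ℚ) ≠ 0 := Int.cast_ne_zero.mpr (by rintro rfl; simp at hu)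
  have hw0 : (w : ℚ) ≠ 0 := Int.cast_ne_zero.mpr (by rintro rfl; simp at hw)
  have hcross : (∑ i, (2 * k i) ^ 2) * w = 4 ^ (e + 1) * (u ^ 2 * m) := by
    simp only [hq, div_pow, ← Finset.sum_div] at hmw
    rw [div_eq_div_iff (by positivity) hw0] at hmw
    have h4 : (4 : ℚ) ^ e = (2 ^ e) ^ 2 := by rw [← pow_mul, mul_comm, pow_mul]; norm_num
    have : ((∑ i, (2 * k i) ^ 2) * w : ℤ) = (4 ^ (e + 1) * (u ^ 2 * m) : ℚ) := by
      push_cast [mul_pow, ← Finset.mul_sum]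
      rw [pow_succ, h4]
      linear_combination 4 * hmw
    exact_mod_cast this
  have hdvd : 4 ^ (e + 1) ∣ ∑ i, (2 * k i) ^ 2 := by
    have hcop : IsCoprime ((4 : ℤ) ^ (e + 1)) w := by
      have := (Int.isCoprime_two_left.mpr hw).pow_left (m := 2 * (e + 1))
      rwa [pow_mul, show (2 : ℤ) ^ 2 = 4 by norm_num] at this
    exact hcop.dvd_of_dvd_mul_right ⟨_, hcross⟩
  obtain ⟨k', hk', h4⟩ := Int.exists_two_pow_mul_of_four_pow_dvd_sum_sq e hdvd
  have hq' : ∀ i, q i = k' i / (2 * u) := by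
    intro i
    have : (2 * k i : ℚ) = 2 ^ e * k' i := by exact_mod_cast hk' i
    rw [hq i]
    field_simp
    linear_combination this
  simp only [hq']
  exact memZ2_or_memZ2_sub_half_of_four_dvd_sum_sq hu h4

theorem memZ2_iff_mem_valuationSubring {x : ℚ} :
    memZ2 x ↔ x ∈ (Rat.padicValuation 2).valuationSubring := by
  rw [Valuation.mem_valuationSubring_iff, Rat.padicValuation_le_one_iff]
  constructor
  · rintro ⟨m, n, hn, rfl⟩ h2
    have hden := Rat.den_dvd m n
    rw [Rat.divInt_eq_div] at hden
    exact Int.not_even_iff_odd.mpr hn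
      (even_iff_two_dvd.mpr ((Int.natCast_dvd_natCast.mpr h2).trans hden))
  · intro h
    exact ⟨x.num, x.den, by simpa [Nat.odd_iff] using h, (Rat.num_div_den x).symm⟩

theorem minpoly_mem_lifts_of_isIntegral {R K A : Type*} [CommRing R] [IsDomain R]
    [IsIntegrallyClosed R] [Field K] [Algebra R K] [IsFractionRing R K] [Ring A] [Algebra R A]
    [Algebra K A] [IsScalarTower R K A] {x : A} (hx : IsIntegral R x) :
    minpoly K x ∈ lifts (algebraMap R K) := by
  have hdvd : minpoly K x ∣ (minpoly R x).map (algebraMap R K) :=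
    minpoly.dvd K x (by rw [aeval_map_algebraMap, minpoly.aeval])
  obtain ⟨g, hg⟩ := IsIntegrallyClosed.eq_map_mul_C_of_dvd K (minpoly.monic hx) hdvd
  rw [(minpoly.monic hx.tower_top).leadingCoeff, C_1, mul_one] at hg
  exact ⟨g, hg⟩

theorem Quaternion.minpoly_eq_of_notMem_range {K : Type*} [Field K] {a : ℍ[K]}
    (ha : a ∉ (algebraMap K ℍ[K]).range) :
    minpoly K a = X ^ 2 - C (2 * a.re) * X + C (normSq a) := by
  have hmonic : (X ^ 2 - C (2 * a.re) * X + C (normSq a)).Monic := by monicity!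
  have hroot : aeval a (X ^ 2 - C (2 * a.re) * X + C (normSq a)) = 0 := by
    simp only [map_add, map_sub, map_mul, map_pow, aeval_X, aeval_C]
    ext <;> simp [pow_two, normSq_def'] <;> ring
  have hint : IsIntegral K a := ⟨_, hmonic, hroot⟩
  refine (eq_of_monic_of_dvd_of_natDegree_le (minpoly.monic hint) hmonic
    (minpoly.dvd K a hroot) ?_).symm
  have h2 := (minpoly.two_le_natDegree_iff hint).mpr ha
  have hdeg : (X ^ 2 - C (2 * a.re) * X + C (normSq a)).natDegree = 2 := by compute_degree!
  omega

theorem Quaternion.normSq_mem_range_of_isIntegral {R K : Type*} [CommRing R] [IsDomain R]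
    [IsIntegrallyClosed R] [Field K] [Algebra R K] [IsFractionRing R K] {a : ℍ[K]}
    (ha : IsIntegral R a) : normSq a ∈ (algebraMap R K).range := by
  have hlifts := minpoly_mem_lifts_of_isIntegral (K := K) ha
  by_cases hrange : a ∈ (algebraMap K ℍ[K]).range
  · obtain ⟨r, rfl⟩ := hrange
    rw [minpoly.eq_X_sub_C] at hlifts
    have hr := (lifts_iff_coeff_lifts _).1 hlifts 0
    rw [coeff_sub, coeff_X_zero, coeff_C_zero, zero_sub, ← RingHom.coe_range, SetLike.mem_coe,
      neg_mem_iff] at hr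
    simpa [normSq_coe, pow_two] using mul_mem hr hr
  · rw [minpoly_eq_of_notMem_range hrange] at hlifts
    simpa using (lifts_iff_coeff_lifts _).1 hlifts 0

/-- Let `D = ℤ_(2)` and let `A` be the ring of Hurwitz quaternions over `D` inside the
rational quaternion algebra `B`: the quaternions with all coordinates in `ℤ_(2)`, or all in
`ℤ_(2) + 1/2`.  Every element of `B` that is integral over `D` (i.e. is a root of a monic
polynomial with coefficients in `ℤ_(2)`) belongs to `A`. -/
theorem stmt_9 (α : Quaternion ℚ)
    (hint : ∃ p : Polynomial ℚ, p.Monic ∧ (∀ i, memZ2 (p.coeff i)) ∧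
      Polynomial.aeval α p = 0) :
    (memZ2 α.re ∧ memZ2 α.imI ∧ memZ2 α.imJ ∧ memZ2 α.imK) ∨
    (memZ2 (α.re - 1/2) ∧ memZ2 (α.imI - 1/2) ∧ memZ2 (α.imJ - 1/2) ∧
      memZ2 (α.imK - 1/2)) := by
  obtain ⟨p, hmonic, hcoeff, hroot⟩ := hint
  set D := (Rat.padicValuation 2).valuationSubring
  have hlifts : p ∈ lifts (algebraMap D ℚ) :=
    (lifts_iff_coeff_lifts p).2 fun n => ⟨⟨_, memZ2_iff_mem_valuationSubring.1 (hcoeff n)⟩, rfl⟩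
  obtain ⟨p', hp', -, hmonic'⟩ := lifts_and_degree_eq_and_monic hlifts hmonic
  have hintegral : IsIntegral D α :=
    ⟨p', hmonic', by rw [← aeval_def, ← aeval_map_algebraMap ℚ, hp', hroot]⟩
  obtain ⟨r, hr⟩ := normSq_mem_range_of_isIntegral hintegral
  have hnorm : memZ2 (normSq α) := hr ▸ memZ2_iff_mem_valuationSubring.2 r.2
  have hsum : memZ2 (∑ i, ![α.re, α.imI, α.imJ, α.imK] i ^ 2) := by
    simpa [Fin.sum_univ_four, normSq_def'] using hnorm
  rcases memZ2_or_memZ2_sub_half_of_memZ2_sum_sq hsum with h | h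
  · exact Or.inl ⟨h 0, h 1, h 2, h 3⟩
  · exact Or.inr ⟨h 0, h 1, h 2, h 3⟩
end

section
/- Let D be a one-dimensional integral domain (not a field) with fraction field K, and let A be a D-algebra, torsion-free and finitely generated as a D-module, with A ∩ K = D. If m is a maximal (two-sided) ideal of A, then m ∩ D is a maximal ideal of D. -/
/-- Let `D` be a one-dimensional integral domain (not a field) with fraction field `K`, and
`A` a (possibly noncommutative) `D`-algebra, torsion-free and finitely generated as a
`D`-module, with `A ∩ K = D` (expressed intrinsically: if `d • a = c·1` with `d ≠ 0` then
`d ∣ c`).  If `m` is a maximal two-sided ideal of `A`, then `m ∩ D` is a maximal ideal of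
`D`. -/
theorem stmt_10 {D K A : Type*} [CommRing D] [IsDomain D] [Ring.DimensionLEOne D]
    (hD : ¬ IsField D)
    [Field K] [Algebra D K] [IsFractionRing D K]
    [Ring A] [Algebra D A] [Module.Finite D A] [NoZeroSMulDivisors D A]
    (hcap : ∀ (a : A) (c d : D), d ≠ 0 → d • a = algebraMap D A c → d ∣ c)
    (m : Ideal A) (hm2 : ∀ x ∈ m, ∀ a : A, x * a ∈ m)
    (hmne : m ≠ ⊤)
    (hmmax : ∀ J : Ideal A, (∀ x ∈ J, ∀ a : A, x * a ∈ J) → m < J → J = ⊤) :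
    (m.comap (algebraMap D A)).IsMaximal := by
  -- `key`: if `f a ∉ m` then `a` is invertible modulo `m`.
  have key : ∀ a : D, algebraMap D A a ∉ m → ∃ c : A, 1 - c * algebraMap D A a ∈ m := by
    intro a ha
    set J : Ideal A := m ⊔ Ideal.span {algebraMap D A a} with hJ
    have hJ2 : ∀ x ∈ J, ∀ z : A, x * z ∈ J := by
      intro x hx z
      rcases Submodule.mem_sup.mp hx with ⟨y, hy, w, hw, rfl⟩
      rcases Submodule.mem_span_singleton.mp hw with ⟨c, rfl⟩
      have hcz : (c • algebraMap D A a) * z = (c * z) • algebraMap D A a := by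
        simp only [smul_eq_mul, mul_assoc]
        rw [Algebra.commutes a z]
      have : (y + c • algebraMap D A a) * z = y * z + (c * z) • algebraMap D A a := by
        rw [add_mul, hcz]
      rw [this]
      exact Submodule.add_mem _ (le_sup_left (α := Ideal A) (hm2 y hy z))
        (le_sup_right (α := Ideal A) (Submodule.smul_mem _ _ (Submodule.mem_span_singleton_self _)))
    have hmem : algebraMap D A a ∈ J :=
      le_sup_right (α := Ideal A) (Submodule.mem_span_singleton_self _)
    have hlt : m < J := lt_of_le_of_ne le_sup_left (by
      intro h
      exact ha (h ▸ hmem))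
    have hJtop : J = ⊤ := hmmax J hJ2 hlt
    have h1 : (1 : A) ∈ J := hJtop ▸ Submodule.mem_top
    rcases Submodule.mem_sup.mp h1 with ⟨y, hy, w, hw, hyw⟩
    rcases Submodule.mem_span_singleton.mp hw with ⟨c, rfl⟩
    refine ⟨c, ?_⟩
    have : (1 : A) - c * algebraMap D A a = y := by
      rw [← hyw, smul_eq_mul, add_sub_cancel_right]
    rw [this]; exact hy
  -- the contraction is prime
  have hpprime : (m.comap (algebraMap D A)).IsPrime := by
    constructor
    · intro h
      apply hmne
      rw [Ideal.eq_top_iff_one] at h ⊢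
      simpa using (Ideal.mem_comap.mp h)
    · intro a b hab
      by_cases ha : algebraMap D A a ∈ m
      · exact Or.inl (Ideal.mem_comap.mpr ha)
      · right
        obtain ⟨c, hc⟩ := key a ha
        have hab' : algebraMap D A a * algebraMap D A b ∈ m := by
          rw [← map_mul]
          exact Ideal.mem_comap.mp hab
        have h1 : (1 - c * algebraMap D A a) * algebraMap D A b ∈ m := hm2 _ hc _
        have h2 : c * (algebraMap D A a * algebraMap D A b) ∈ m :=
          Submodule.smul_mem m c hab'
        have : algebraMap D A b
            = (1 - c * algebraMap D A a) * algebraMap D A b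
              + c * (algebraMap D A a * algebraMap D A b) := by
          noncomm_ring
        rw [Ideal.mem_comap, this]
        exact Submodule.add_mem _ h1 h2
  -- the contraction is nonzero
  have hpne : m.comap (algebraMap D A) ≠ ⊥ := by
    intro hbot
    have : Nontrivial D := inferInstance
    obtain ⟨d, hd0, hdu⟩ := Ring.exists_not_isUnit_of_not_isField hD
    have hdm : algebraMap D A d ∉ m := by
      intro h
      have : d ∈ m.comap (algebraMap D A) := Ideal.mem_comap.mpr h
      rw [hbot] at this
      exact hd0 (by simpa using this)
    obtain ⟨c, hc⟩ := key d hdm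
    obtain ⟨P, hPmonic, hPeval⟩ := IsIntegral.of_finite D c
    set q : Polynomial D := P.scaleRoots d with hq
    set u : A := algebraMap D A d * c with hu
    have hq0 : q.eval₂ (algebraMap D A) u = 0 := by
      rw [hq, hu, Polynomial.scaleRoots_eval₂_mul_of_commute (algebraMap D A) c d
        (Algebra.commutes d c) (fun s₁ s₂ => Algebra.commutes s₁ (algebraMap D A s₂)),
        hPeval, mul_zero]
    have hu1 : u - 1 ∈ m := by
      have h1 : u = c * algebraMap D A d := Algebra.commutes d c
      have h2 := Submodule.neg_mem m hc
      rw [neg_sub] at h2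
      rw [h1]; exact h2
    have hpow : ∀ i : ℕ, u ^ i - 1 ∈ m := by
      intro i
      induction i with
      | zero => simp
      | succ n ih =>
        have h1 : u ^ n * (u - 1) ∈ m := Submodule.smul_mem m (u ^ n) hu1
        have : u ^ (n + 1) - 1 = u ^ n * (u - 1) + (u ^ n - 1) := by
          rw [mul_sub, mul_one, pow_succ]; abel
        rw [this]
        exact Submodule.add_mem _ h1 ih
    -- `q.eval 1 ∈ p = ⊥`
    have hsum : q.eval₂ (algebraMap D A) u - algebraMap D A (q.eval 1)
        = ∑ i ∈ Finset.range (q.natDegree + 1),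
            algebraMap D A (q.coeff i) * (u ^ i - 1) := by
      rw [Polynomial.eval₂_eq_sum_range, Polynomial.eval_eq_sum_range, map_sum,
        ← Finset.sum_sub_distrib]
      refine Finset.sum_congr rfl fun i _ => ?_
      rw [mul_sub, mul_one, one_pow, mul_one]
    have hmemsum : q.eval₂ (algebraMap D A) u - algebraMap D A (q.eval 1) ∈ m := by
      rw [hsum]
      exact Submodule.sum_mem _ fun i _ => Submodule.smul_mem m _ (hpow i)
    have heval0 : algebraMap D A (q.eval 1) ∈ m := by
      have h2 := Submodule.neg_mem m hmemsum
      rw [neg_sub, hq0, sub_zero] at h2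
      exact h2
    have hq1 : q.eval 1 = 0 := by
      have : q.eval 1 ∈ m.comap (algebraMap D A) := Ideal.mem_comap.mpr heval0
      rw [hbot] at this
      simpa using this
    -- extract divisibility: `d ∣ -1`
    have hqmonic : q.Monic := (Polynomial.monic_scaleRoots_iff d).mpr hPmonic
    have hqdeg : q.natDegree = P.natDegree := Polynomial.natDegree_scaleRoots P d
    have hqev : q.eval 1 = (∑ i ∈ Finset.range q.natDegree, q.coeff i) + 1 := by
      rw [Polynomial.eval_eq_sum_range, Finset.sum_range_succ]
      simp only [one_pow, mul_one]
      rw [hqmonic.coeff_natDegree]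
    have hdvd : d ∣ ∑ i ∈ Finset.range q.natDegree, q.coeff i := by
      refine Finset.dvd_sum fun i hi => ?_
      rw [hq, Polynomial.coeff_scaleRoots]
      have hne : P.natDegree - i ≠ 0 := by
        rw [Finset.mem_range, hqdeg] at hi
        omega
      exact Dvd.dvd.mul_left (dvd_pow_self d hne) _
    have : d ∣ (1 : D) := by
      have hneg : (∑ i ∈ Finset.range q.natDegree, q.coeff i) = -1 := by
        have h := hqev
        rw [hq1] at h
        exact eq_neg_of_add_eq_zero_left h.symm
      rw [hneg] at hdvd
      exact (dvd_neg).mp hdvd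
    exact hdu (isUnit_of_dvd_one this)
  exact Ring.DimensionLEOne.maximalOfPrime hpne hpprime
end

section
/- Let D = ℤ, A = M₂(ℤ), k a positive integer, and a the matrix with rows (0, k) and (k, 0). Then Int_ℚ({a}, A) = {f ∈ ℚ[X] : f(a) ∈ A} is not integrally closed: the polynomial (X−k)/(2k) is integral over Int_ℚ({a}, A) but (X−k)/(2k) ∉ Int_ℚ({a}, A). -/
open Polynomial

private lemma stmt14_one (i j : Fin 2) :
    ∃ m : ℤ, ((1 : Matrix (Fin 2) (Fin 2) ℚ)) i j = (m : ℚ) := by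
  fin_cases i <;> fin_cases j
  · exact ⟨1, by simp [Matrix.one_apply]⟩
  · exact ⟨0, by simp [Matrix.one_apply]⟩
  · exact ⟨0, by simp [Matrix.one_apply]⟩
  · exact ⟨1, by simp [Matrix.one_apply]⟩

/-- Let `k > 0` and `a = [[0,k],[k,0]] ∈ M₂(ℤ)`.  The ring
`Int_ℚ({a}, M₂(ℤ)) = {f ∈ ℚ[X] : f(a) ∈ M₂(ℤ)}` is not integrally closed: the polynomial
`g = (X−k)/(2k)` satisfies a monic polynomial with coefficients in `Int_ℚ({a}, M₂(ℤ))`, but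
`g ∉ Int_ℚ({a}, M₂(ℤ))`. -/
theorem stmt_14 (k : ℤ) (hk : 0 < k) :
    (∃ p : Polynomial (Polynomial ℚ), p.Monic ∧
        (∀ n : ℕ, ∀ i j : Fin 2,
          ∃ m : ℤ, (Polynomial.aeval (!![0, (k : ℚ); k, 0]) (p.coeff n)) i j = (m : ℚ)) ∧
        Polynomial.eval (Polynomial.C (1 / (2 * (k : ℚ))) *
          (Polynomial.X - Polynomial.C (k : ℚ))) p = 0) ∧
    ¬ (∀ i j : Fin 2,
        ∃ m : ℤ, (Polynomial.aeval (!![0, (k : ℚ); k, 0])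
          (Polynomial.C (1 / (2 * (k : ℚ))) *
            (Polynomial.X - Polynomial.C (k : ℚ)))) i j = (m : ℚ)) := by
  have hc : (k : ℚ) ≠ 0 := Int.cast_ne_zero.mpr hk.ne'
  set c : ℚ := (k : ℚ) with hcdef
  set a : Matrix (Fin 2) (Fin 2) ℚ := !![0, c; c, 0] with ha
  set q : ℚ[X] := (C (1 / (2 * c)))^2 * (X^2 - C (c^2)) with hq
  have h2 : a ^ 2 = (c^2) • (1 : Matrix (Fin 2) (Fin 2) ℚ) := by
    rw [ha, pow_two]
    ext i j
    fin_cases i <;> fin_cases j <;>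
      simp [Matrix.mul_apply, Fin.sum_univ_succ, pow_two, Matrix.one_apply]
  have hkey : Polynomial.aeval a (X^2 - C (c^2)) = 0 := by
    rw [map_sub, map_pow, aeval_X, aeval_C, h2, Algebra.algebraMap_eq_smul_one, sub_self]
  have haq : Polynomial.aeval a q = 0 := by
    rw [hq, map_mul, hkey, mul_zero]
  constructor
  · refine ⟨X^2 + X - C q, ?_, ?_, ?_⟩
    · have hdeg : (X + (-C q) : (ℚ[X])[X]).degree < 2 := by
        apply lt_of_le_of_lt (Polynomial.degree_add_le _ _)
        apply max_lt
        · exact lt_of_le_of_lt Polynomial.degree_X_le (by norm_num)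
        · exact lt_of_le_of_lt (le_trans (Polynomial.degree_neg (C q)).le
            Polynomial.degree_C_le) (by norm_num)
      have h := Polynomial.monic_X_pow_add hdeg
      have : X ^ 2 + (X + -C q) = (X^2 + X - C q : (ℚ[X])[X]) := by ring
      rwa [this] at h
    · intro n i j
      match n with
      | 0 =>
        have hco : (X^2 + X - C q : (ℚ[X])[X]).coeff 0 = -q := by
          simp [Polynomial.coeff_sub]
        rw [hco, map_neg, haq, neg_zero]
        exact ⟨0, by simp⟩
      | 1 =>
        have hco : (X^2 + X - C q : (ℚ[X])[X]).coeff 1 = 1 := by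
          simp [Polynomial.coeff_sub, Polynomial.coeff_X_pow]
        rw [hco, map_one]
        exact stmt14_one i j
      | 2 =>
        have hco : (X^2 + X - C q : (ℚ[X])[X]).coeff 2 = 1 := by
          simp [Polynomial.coeff_sub, Polynomial.coeff_X_pow, Polynomial.coeff_X,
            Polynomial.coeff_C]
        rw [hco, map_one]
        exact stmt14_one i j
      | (m + 3) =>
        have hco : (X^2 + X - C q : (ℚ[X])[X]).coeff (m + 3) = 0 := by
          simp [Polynomial.coeff_sub, Polynomial.coeff_X_pow, Polynomial.coeff_X,
            Polynomial.coeff_C]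
        rw [hco, map_zero]
        exact ⟨0, by simp⟩
    · have hu : C (1 / (2 * c)) * (2 * C c) = (1 : ℚ[X]) := by
        rw [show (2 : ℚ[X]) * C c = C (c + c) by rw [C_add]; ring, ← C_mul,
          show 1 / (2 * c) * (c + c) = 1 by field_simp; ring, C_1]
      simp only [Polynomial.eval_sub, Polynomial.eval_add, Polynomial.eval_pow,
        Polynomial.eval_X, Polynomial.eval_C, hq, map_pow]
      linear_combination (- (C (1 / (2 * c)) * (X - C c))) * hu
  · intro h
    obtain ⟨m, hm⟩ := h 0 0
    have hval : (Polynomial.aeval a (C (1 / (2 * c)) * (X - C c))) 0 0 = -(1/2) := by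
      rw [map_mul, map_sub, aeval_X, aeval_C, aeval_C, Algebra.algebraMap_eq_smul_one,
        Algebra.algebraMap_eq_smul_one]
      rw [ha]
      simp [Matrix.mul_apply, Fin.sum_univ_succ, Matrix.one_apply]
      field_simp
    rw [hval] at hm
    have h1 : (2 : ℚ) * m = -1 := by linarith [hm.symm]
    have h2 : (2 : ℤ) * m = -1 := by exact_mod_cast h1
    omega
end

section
/- Let D be an integrally closed domain with fraction field K, B a finite-dimensional K-algebra, b ∈ B with minimal polynomial μ_b ∈ K[X], and f ∈ K[X]. Then the set of roots (in a fixed algebraic closure of K) of the minimal polynomial of f(b) equals the image under f of the set of roots of μ_b. -/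
/-!
If `μ_b(y) = 0` then `μ_{f(b)}(f(y)) = 0`, because `μ_b` divides `μ_{f(b)} ∘ f`.
Conversely, let `x` be a root of `μ_{f(b)}` with minimal polynomial `q` over `K`. If `μ_b` and
`q ∘ f` were coprime, a Bézout identity evaluated at `b` would show that the cofactor
`μ_{f(b)} / q` already annihilates `f(b)`, which is impossible. So they have a common root `y`
in `K̄`; then `f(y)` is a `K`-conjugate of `x`, and an automorphism of `K̄` carrying `f(y)` to `x`
carries `y` to a root of `μ_b` whose image under `f` is `x`.
-/

open Polynomial

section

variable {K A : Type*} [Field K] [Ring A] [Algebra K A]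

theorem minpoly_dvd_minpoly_aeval_comp (a : A) (f : K[X]) :
    minpoly K a ∣ (minpoly K (aeval a f)).comp f :=
  minpoly.dvd K a (by rw [aeval_comp, minpoly.aeval])

theorem aeval_minpoly_aeval_eq_zero {L : Type*} [CommRing L] [Algebra K L] {a : A}
    (f : K[X]) {y : L} (hy : aeval y (minpoly K a) = 0) :
    aeval (aeval y f) (minpoly K (aeval a f)) = 0 := by
  obtain ⟨g, hg⟩ := minpoly_dvd_minpoly_aeval_comp a f
  rw [← aeval_comp, hg, map_mul, hy, zero_mul]

theorem not_isCoprime_minpoly_comp_of_dvd {a : A} {f : K[X]}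
    (hfa : IsIntegral K (aeval a f)) {q : K[X]} (hdvd : q ∣ minpoly K (aeval a f))
    (hq : 0 < q.natDegree) :
    ¬IsCoprime (minpoly K a) (q.comp f) := by
  rintro ⟨u, v, huv⟩
  obtain ⟨r, hr⟩ := hdvd
  have hr_root : aeval (aeval a f) r = 0 := by
    calc aeval (aeval a f) r
        = aeval a ((u * minpoly K a + v * q.comp f) * r.comp f) := by
          rw [huv, one_mul, aeval_comp]
      _ = aeval a u * aeval a (minpoly K a) * aeval a (r.comp f)
            + aeval a v * aeval (aeval a f) (q * r) := by
          simp only [add_mul, mul_assoc, ← mul_comp, map_add, map_mul, aeval_comp]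
      _ = 0 := by rw [minpoly.aeval, ← hr, minpoly.aeval, mul_zero, zero_mul, mul_zero, add_zero]
  have hqr : q * r ≠ 0 := hr ▸ minpoly.ne_zero hfa
  have hle := natDegree_le_of_dvd (minpoly.dvd K _ hr_root) (right_ne_zero_of_mul hqr)
  rw [hr, natDegree_mul (left_ne_zero_of_mul hqr) (right_ne_zero_of_mul hqr)] at hle
  omega

theorem exists_aeval_minpoly_eq_zero_and_aeval_eq {L : Type*} [Field L] [Algebra K L]
    [IsAlgClosed L] [Normal K L] {a : A} {f : K[X]} (hfa : IsIntegral K (aeval a f)) {x : L}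
    (hx : aeval x (minpoly K (aeval a f)) = 0) :
    ∃ y : L, aeval y (minpoly K a) = 0 ∧ aeval y f = x := by
  have hx_int : IsIntegral K x := Algebra.IsIntegral.isIntegral x
  obtain ⟨z, hz, hfz⟩ :
      ∃ z : L, aeval z (minpoly K a) = 0 ∧ aeval (aeval z f) (minpoly K x) = 0 := by
    have := not_isCoprime_minpoly_comp_of_dvd hfa (minpoly.dvd K x hx)
      (minpoly.natDegree_pos hx_int)
    simpa [isCoprime_iff_aeval_ne_zero_of_isAlgClosed K L, aeval_comp] using this
  obtain ⟨σ, hσ⟩ := minpoly.exists_algEquiv_of_root hx_int.isAlgebraic hfz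
  refine ⟨σ z, ?_, ?_⟩
  · rw [aeval_algHom_apply, hz, map_zero]
  · rw [aeval_algHom_apply, hσ]

end

theorem stmt_16_general {K B : Type*}
    [Field K]
    [Ring B] [Algebra K B] [FiniteDimensional K B]
    (b : B) (f : Polynomial K) :
    {x : AlgebraicClosure K | Polynomial.aeval x (minpoly K (Polynomial.aeval b f)) = 0}
      = (fun x : AlgebraicClosure K => Polynomial.aeval x f) ''
          {x : AlgebraicClosure K | Polynomial.aeval x (minpoly K b) = 0} := by
  ext x
  constructor
  · exact exists_aeval_minpoly_eq_zero_and_aeval_eq (Algebra.IsIntegral.isIntegral _)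
  · rintro ⟨y, hy, rfl⟩
    exact aeval_minpoly_aeval_eq_zero f hy

/-- Let `D` be an integrally closed domain with fraction field `K`, `B` a finite-dimensional
`K`-algebra, `b ∈ B`, and `f ∈ K[X]`.  Then the set of roots, in an algebraic closure of
`K`, of the minimal polynomial of `f(b)` equals the image under `f` of the set of roots of
the minimal polynomial of `b`. -/
theorem stmt_16 {D K B : Type*} [CommRing D] [IsDomain D] [IsIntegrallyClosed D]
    [Field K] [Algebra D K] [IsFractionRing D K]
    [Ring B] [Algebra K B] [FiniteDimensional K B]
    (b : B) (f : Polynomial K) :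
    {x : AlgebraicClosure K | Polynomial.aeval x (minpoly K (Polynomial.aeval b f)) = 0}
      = (fun x : AlgebraicClosure K => Polynomial.aeval x f) ''
          {x : AlgebraicClosure K | Polynomial.aeval x (minpoly K b) = 0} :=
  stmt_16_general b f
end

section
/- Let R₂ be a finite ring with Jacobson radical J₂ such that R₂/J₂ has a direct factor isomorphic to Mₙ(F) for a finite field F and n ≥ 2. Then R₂ contains an element b with b² = 0 but b ∉ J₂ (in particular R₂ contains a nonzero nilpotent element outside its Jacobson radical). -/
/-!
In a finite ring, an element `x` with `1 - x y` a unit for every `y` is nilpotent: some power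
repeats, `x ^ (i + k + 1) = x ^ i`, and then `x ^ i (1 - x x ^ k) = 0` forces `x ^ i = 0`.
So the kernel of `π` is nil and idempotents lift along it. Lifting the matrix unit `E₀₀` to an
idempotent `e` and `E₀₁` to any `a`, the element `e a (1 - e)` squares to zero because
`(1 - e) e = 0`, yet it maps to `E₀₀ E₀₁ (1 - E₀₀) = E₀₁ ≠ 0`.
-/

theorem pow_eq_zero_of_pow_eq_pow_add_succ {R : Type*} [Ring R] {x : R} {i k : ℕ}
    (hu : IsUnit (1 - x * x ^ k)) (h : x ^ (i + k + 1) = x ^ i) : x ^ i = 0 := by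
  rw [← hu.mul_left_eq_zero, mul_sub, mul_one, ← pow_succ', ← pow_add, ← add_assoc, h, sub_self]

theorem isNilpotent_of_forall_isUnit_one_sub_mul {R : Type*} [Ring R] [Finite R] {x : R}
    (hx : ∀ y, IsUnit (1 - x * y)) : IsNilpotent x := by
  obtain ⟨i, j, hij, hpow⟩ := Set.finite_univ.exists_lt_map_eq_of_forall_mem
    (f := fun n : ℕ ↦ x ^ n) fun _ ↦ Set.mem_univ _
  obtain ⟨k, rfl⟩ := Nat.exists_eq_add_of_lt hij
  exact ⟨i, pow_eq_zero_of_pow_eq_pow_add_succ (hx _) hpow.symm⟩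

theorem IsIdempotentElem.mul_mul_one_sub_sq {R : Type*} [Ring R] {e : R} (he : IsIdempotentElem e)
    (a : R) : (e * a * (1 - e)) ^ 2 = 0 := by
  rw [sq, mul_assoc, ← mul_assoc (1 - e), ← mul_assoc (1 - e), he.one_sub_mul_self,
    zero_mul, zero_mul, mul_zero]

theorem exists_sq_eq_zero_map_ne_zero_of_ker_isNilpotent {R S : Type*} [Ring R] [Ring S]
    (f : R →+* S) (hf : Function.Surjective f) (hker : ∀ x ∈ RingHom.ker f, IsNilpotent x)
    {e a : S} (he : IsIdempotentElem e) (hea : e * a * (1 - e) ≠ 0) :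
    ∃ b : R, b ^ 2 = 0 ∧ f b ≠ 0 := by
  obtain ⟨e', he', rfl⟩ := exists_isIdempotentElem_eq_of_ker_isNilpotent f hker e (hf e) he
  obtain ⟨a', rfl⟩ := hf a
  exact ⟨e' * a' * (1 - e'), he'.mul_mul_one_sub_sq a', by simpa using hea⟩

namespace Matrix

variable {n : Type*} [DecidableEq n] [Fintype n]

theorem isIdempotentElem_single_one {α : Type*} [Semiring α] (i : n) :
    IsIdempotentElem (single i i (1 : α)) := by
  rw [IsIdempotentElem, single_mul_single_same, mul_one]

theorem single_mul_single_mul_one_sub_single {α : Type*} [Ring α] {i j : n} (hij : i ≠ j)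
    (c : α) : single i i 1 * single i j c * (1 - single i i 1) = single i j c := by
  rw [single_mul_single_same, one_mul, mul_sub, mul_one,
    single_mul_single_of_ne _ _ _ _ hij.symm, sub_zero]

end Matrix

theorem stmt_19_general {R₂ F : Type*} [Ring R₂] [Finite R₂] [Field F]
    (n : ℕ) (hn : 2 ≤ n)
    (h : ∃ (T : Type) (_ : Ring T)
        (π : R₂ →+* (Matrix (Fin n) (Fin n) F × T)),
        Function.Surjective π ∧
        ∀ x : R₂, π x = 0 ↔ (∀ y : R₂, IsUnit (1 - x * y))) :
    ∃ b : R₂, b ^ 2 = 0 ∧ ¬ (∀ y : R₂, IsUnit (1 - b * y)) := by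
  obtain ⟨T, _, π, hπ, hker⟩ := h
  have hnil (x : R₂) (hx : x ∈ RingHom.ker π) : IsNilpotent x :=
    isNilpotent_of_forall_isUnit_one_sub_mul ((hker x).1 hx)
  let i : Fin n := ⟨0, by omega⟩
  let j : Fin n := ⟨1, by omega⟩
  have hij : i ≠ j := by simp [i, j, Fin.ext_iff]
  have he : IsIdempotentElem ((Matrix.single i i 1, 0) : Matrix (Fin n) (Fin n) F × T) :=
    Prod.ext (Matrix.isIdempotentElem_single_one i) (zero_mul 0)
  have hea : (Matrix.single i i 1, 0) * (Matrix.single i j 1, 0) * (1 - (Matrix.single i i 1, 0))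
      ≠ (0 : Matrix (Fin n) (Fin n) F × T) := by
    intro h0
    have h1 := congrArg Prod.fst h0
    simp only [Prod.fst_mul, Prod.fst_sub, Prod.fst_one, Prod.fst_zero,
      Matrix.single_mul_single_mul_one_sub_single hij] at h1
    simpa using congrFun₂ h1 i j
  obtain ⟨b, hb, hπb⟩ := exists_sq_eq_zero_map_ne_zero_of_ker_isNilpotent π hπ hnil he hea
  exact ⟨b, hb, fun hJ ↦ hπb ((hker b).2 hJ)⟩

/-- Let `R₂` be a finite ring with Jacobson radical
`J₂ = {x | ∀ y, IsUnit (1 − x y)}`, such that `R₂/J₂` has a direct factor isomorphic to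
`Mₙ(F)` for a finite field `F` and `n ≥ 2` (expressed via a surjective ring homomorphism
onto `Mₙ(F) × T` with kernel `J₂`).  Then `R₂` contains an element `b` with `b² = 0` but
`b ∉ J₂`; in particular, `R₂` has a nonzero nilpotent element outside its Jacobson
radical. -/
theorem stmt_19 {R₂ F : Type*} [Ring R₂] [Finite R₂] [Field F] [Finite F]
    (n : ℕ) (hn : 2 ≤ n)
    (h : ∃ (T : Type) (_ : Ring T)
        (π : R₂ →+* (Matrix (Fin n) (Fin n) F × T)),
        Function.Surjective π ∧
        ∀ x : R₂, π x = 0 ↔ (∀ y : R₂, IsUnit (1 - x * y))) :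
    ∃ b : R₂, b ^ 2 = 0 ∧ ¬ (∀ y : R₂, IsUnit (1 - b * y)) :=
  stmt_19_general n hn h
end
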